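/- arXiv:1006.2601 — 4 statements merged into one kernel-verified Lean document; each statement's English description precedes it below -/
import Mathlib

section
/- Let V be a real vector space, a : V × V → ℝ a bilinear form with a(v, v) > 0 for every v ≠ 0, m : V × V → ℝ a symmetric positive semidefinite bilinear form, d ≥ 0, c₀, …, c_d > 0 real numbers, and U₀, …, U_d ∈ V. If ∑_{j=0}^{d} c_j · a(U_j, U_j) + ∑_{j=0}^{d} m(U_j, U_j) + 2 · ∑_{0 ≤ j < k ≤ d, j + k even} m(U_j, U_k) = 0, then U_j = 0 for every j. -/
/-- Uniqueness step in the proof of Theorem 3.1: if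
`∑ c_j a(U_j,U_j) + ∑ m(U_j,U_j) + 2 ∑_{j<k, j+k even} m(U_j,U_k) = 0`,
with `a` positive definite, `m` symmetric positive semidefinite and `c_j > 0`,
then all `U_j` vanish. -/
theorem dg_uniqueness {V : Type*} [AddCommGroup V] [Module ℝ V]
    (a : V →ₗ[ℝ] V →ₗ[ℝ] ℝ) (ha : ∀ v, v ≠ 0 → 0 < a v v)
    (m : V →ₗ[ℝ] V →ₗ[ℝ] ℝ) (hsymm : ∀ v w, m v w = m w v)
    (hpos : ∀ v, 0 ≤ m v v)
    (d : ℕ) (c : Fin (d + 1) → ℝ) (hc : ∀ j, 0 < c j)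
    (U : Fin (d + 1) → V)
    (hzero : (∑ j, c j * a (U j) (U j)) + (∑ j, m (U j) (U j))
        + 2 * ∑ j, ∑ k ∈ Finset.univ.filter
            (fun k : Fin (d + 1) => j < k ∧ Even ((j : ℕ) + (k : ℕ))), m (U j) (U k) = 0) :
    ∀ j, U j = 0 := by
  classical
  set f : Fin (d + 1) → Fin (d + 1) → ℝ := fun j k => m (U j) (U k) with hf
  set S : ℝ := ∑ j, ∑ k ∈ Finset.univ.filter
      (fun k : Fin (d + 1) => j < k ∧ Even ((j : ℕ) + (k : ℕ))), f j k with hS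
  set Q : ℝ := ∑ j : Fin (d + 1), ∑ k : Fin (d + 1),
      if Even ((j : ℕ) + (k : ℕ)) then f j k else 0 with hQ
  have hsplit : ∀ j k : Fin (d + 1),
      (if Even ((j : ℕ) + (k : ℕ)) then f j k else 0)
      = (if j < k ∧ Even ((j : ℕ) + (k : ℕ)) then f j k else 0)
        + (if j = k then f j k else 0)
        + (if k < j ∧ Even ((j : ℕ) + (k : ℕ)) then f j k else 0) := by
    intro j k
    rcases lt_trichotomy j k with h | h | h
    · have h1 : j ≠ k := ne_of_lt h
      have h2 : ¬ k < j := not_lt_of_gt h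
      by_cases he : Even ((j : ℕ) + (k : ℕ)) <;> simp [h, h1, h2, he]
    · subst h
      have he : Even ((j : ℕ) + (j : ℕ)) := ⟨j, rfl⟩
      simp [he]
    · have h1 : j ≠ k := (ne_of_lt h).symm
      have h2 : ¬ j < k := not_lt_of_gt h
      by_cases he : Even ((j : ℕ) + (k : ℕ)) <;> simp [h, h1, h2, he]
  have hQdiag : Q = (∑ j, f j j) + 2 * S := by
    have h1 : Q = (∑ j : Fin (d + 1), ∑ k : Fin (d + 1),
          if j < k ∧ Even ((j : ℕ) + (k : ℕ)) then f j k else 0)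
        + (∑ j : Fin (d + 1), ∑ k : Fin (d + 1), if j = k then f j k else 0)
        + (∑ j : Fin (d + 1), ∑ k : Fin (d + 1),
          if k < j ∧ Even ((j : ℕ) + (k : ℕ)) then f j k else 0) := by
      rw [hQ, ← Finset.sum_add_distrib, ← Finset.sum_add_distrib]
      refine Finset.sum_congr rfl fun j _ => ?_
      rw [← Finset.sum_add_distrib, ← Finset.sum_add_distrib]
      exact Finset.sum_congr rfl fun k _ => hsplit j k
    have h2 : (∑ j : Fin (d + 1), ∑ k : Fin (d + 1), if j = k then f j k else 0)
        = ∑ j, f j j := by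
      refine Finset.sum_congr rfl fun j _ => ?_
      simp
    have h3 : (∑ j : Fin (d + 1), ∑ k : Fin (d + 1),
          if k < j ∧ Even ((j : ℕ) + (k : ℕ)) then f j k else 0) = S := by
      rw [Finset.sum_comm, hS]
      refine Finset.sum_congr rfl fun k _ => ?_
      rw [Finset.sum_filter]
      refine Finset.sum_congr rfl fun j _ => ?_
      have hfs : f j k = f k j := hsymm _ _
      rw [show ((k : ℕ) + (j : ℕ)) = ((j : ℕ) + (k : ℕ)) from Nat.add_comm _ _, hfs]
    have h4 : (∑ j : Fin (d + 1), ∑ k : Fin (d + 1),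
          if j < k ∧ Even ((j : ℕ) + (k : ℕ)) then f j k else 0) = S := by
      rw [hS]
      exact Finset.sum_congr rfl fun j _ => (Finset.sum_filter _ _).symm
    rw [h1, h2, h3, h4]; ring
  have hQnn : 0 ≤ Q := by
    set E : V := ∑ j ∈ Finset.univ.filter (fun j : Fin (d + 1) => Even (j : ℕ)), U j with hE
    set O : V := ∑ j ∈ Finset.univ.filter (fun j : Fin (d + 1) => ¬ Even (j : ℕ)), U j with hO
    have hmEE : m E E = ∑ j ∈ Finset.univ.filter (fun j : Fin (d + 1) => Even (j : ℕ)),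
        ∑ k ∈ Finset.univ.filter (fun k : Fin (d + 1) => Even (k : ℕ)), f j k := by
      rw [hE]
      simp only [map_sum, LinearMap.sum_apply, hf]
      exact Finset.sum_comm
    have hmOO : m O O = ∑ j ∈ Finset.univ.filter (fun j : Fin (d + 1) => ¬ Even (j : ℕ)),
        ∑ k ∈ Finset.univ.filter (fun k : Fin (d + 1) => ¬ Even (k : ℕ)), f j k := by
      rw [hO]
      simp only [map_sum, LinearMap.sum_apply, hf]
      exact Finset.sum_comm
    have hQsplit : Q = m E E + m O O := by
      rw [hQ, ← Finset.sum_filter_add_sum_filter_not Finset.univ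
        (fun j : Fin (d + 1) => Even (j : ℕ)), hmEE, hmOO]
      congr 1
      · refine Finset.sum_congr rfl fun j hj => ?_
        have hje : Even (j : ℕ) := (Finset.mem_filter.mp hj).2
        rw [Finset.sum_filter]
        refine Finset.sum_congr rfl fun k _ => ?_
        congr 1
        simp [Nat.even_add, hje]
      · refine Finset.sum_congr rfl fun j hj => ?_
        have hje : ¬ Even (j : ℕ) := (Finset.mem_filter.mp hj).2
        rw [Finset.sum_filter]
        refine Finset.sum_congr rfl fun k _ => ?_
        congr 1
        simp [Nat.even_add, hje]
    rw [hQsplit]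
    exact add_nonneg (hpos E) (hpos O)
  have hAz : (∑ j, c j * a (U j) (U j)) = 0 := by
    have hterm : ∀ j ∈ (Finset.univ : Finset (Fin (d + 1))),
        (0 : ℝ) ≤ c j * a (U j) (U j) := by
      intro j _
      by_cases h : U j = 0
      · simp [h]
      · exact le_of_lt (mul_pos (hc j) (ha _ h))
    have hAnn : 0 ≤ ∑ j, c j * a (U j) (U j) := Finset.sum_nonneg hterm
    have hkey : (∑ j, c j * a (U j) (U j)) + Q = 0 := by
      rw [hQdiag, ← hzero, hS, hf]; ring
    linarith
  intro j
  by_contra h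
  have h1 : 0 < c j * a (U j) (U j) := mul_pos (hc j) (ha _ h)
  have h2 : ∀ k ∈ (Finset.univ : Finset (Fin (d + 1))),
      (0 : ℝ) ≤ c k * a (U k) (U k) := by
    intro k _
    by_cases hk : U k = 0
    · simp [hk]
    · exact le_of_lt (mul_pos (hc k) (ha _ hk))
  have := (Finset.sum_eq_zero_iff_of_nonneg h2).mp hAz j (Finset.mem_univ j)
  linarith
end

section
/- Define the n-th Legendre polynomial P_n ∈ ℝ[X] by Rodrigues' formula P_n = (1/(2ⁿ n!)) · Dⁿ((X² − 1)ⁿ), where D denotes polynomial differentiation. Then for all j, k ≥ 0, ∫_{−1}^{1} P_k'(x) P_j(x) dx = 0 if k ≤ j, and ∫_{−1}^{1} P_k'(x) P_j(x) dx = 1 − (−1)^{k+j} if k > j. -/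
/-!
Rodrigues' formula lets one integrate by parts `n` times against `Pₙ`: the boundary terms vanish
because `(X² - 1)ⁿ` has zeros of order `n` at `±1`, so `Pₙ` is orthogonal to every polynomial of
degree `< n`. As `P'ₖ` has degree `< k`, this settles `k ≤ j`. For `j < k`, one more integration by
parts moves the derivative onto `Pⱼ`, and only the boundary term
`Pₖ(1) Pⱼ(1) - Pₖ(-1) Pⱼ(-1) = 1 - (-1)^(k+j)` survives.
-/

open Polynomial

/-- The `n`-th Legendre polynomial, defined by Rodrigues' formula. -/
noncomputable def legendre (n : ℕ) : Polynomial ℝ :=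
  (1 / (2 ^ n * n.factorial) : ℝ) • (derivative^[n] ((X ^ 2 - 1) ^ n))

open Nat

namespace Polynomial

section CommRing

variable {R : Type*} [CommRing R]

theorem eval_iterate_derivative_eq_factorial_mul_coeff_taylor (p : R[X]) (a : R) (m : ℕ) :
    (derivative^[m] p).eval a = m ! * (taylor a p).coeff m := by
  rw [taylor_coeff, ← factorial_smul_hasseDeriv, LinearMap.smul_apply, eval_smul, nsmul_eq_mul]

theorem taylor_X_sub_C_pow_mul (a : R) (n : ℕ) (q : R[X]) :
    taylor a ((X - C a) ^ n * q) = X ^ n * taylor a q := by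
  simp [taylor_mul, taylor_pow, taylor_X]

theorem eval_iterate_derivative_X_sub_C_pow_mul_of_lt (a : R) (q : R[X]) {m n : ℕ}
    (h : m < n) : (derivative^[m] ((X - C a) ^ n * q)).eval a = 0 := by
  rw [eval_iterate_derivative_eq_factorial_mul_coeff_taylor, taylor_X_sub_C_pow_mul,
    coeff_X_pow_mul', if_neg h.not_ge, mul_zero]

theorem eval_iterate_derivative_X_sub_C_pow_mul_self (a : R) (q : R[X]) (n : ℕ) :
    (derivative^[n] ((X - C a) ^ n * q)).eval a = n ! * q.eval a := by
  rw [eval_iterate_derivative_eq_factorial_mul_coeff_taylor, taylor_X_sub_C_pow_mul,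
    coeff_X_pow_mul', if_pos le_rfl, Nat.sub_self, taylor_coeff_zero]

theorem X_sq_sub_one_pow_eq_mul (n : ℕ) :
    ((X : R[X]) ^ 2 - 1) ^ n = (X - C 1) ^ n * (X - C (-1)) ^ n := by
  rw [← mul_pow]
  congr 1
  simp only [map_one, map_neg]
  ring

theorem eval_one_iterate_derivative_sq_sub_one_pow_of_lt {m n : ℕ} (h : m < n) :
    (derivative^[m] (((X : R[X]) ^ 2 - 1) ^ n)).eval 1 = 0 := by
  rw [X_sq_sub_one_pow_eq_mul, eval_iterate_derivative_X_sub_C_pow_mul_of_lt _ _ h]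

theorem eval_neg_one_iterate_derivative_sq_sub_one_pow_of_lt {m n : ℕ} (h : m < n) :
    (derivative^[m] (((X : R[X]) ^ 2 - 1) ^ n)).eval (-1) = 0 := by
  rw [X_sq_sub_one_pow_eq_mul, mul_comm, eval_iterate_derivative_X_sub_C_pow_mul_of_lt _ _ h]

theorem eval_one_iterate_derivative_sq_sub_one_pow (n : ℕ) :
    (derivative^[n] (((X : R[X]) ^ 2 - 1) ^ n)).eval 1 = (n ! : R) * 2 ^ n := by
  rw [X_sq_sub_one_pow_eq_mul, eval_iterate_derivative_X_sub_C_pow_mul_self]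
  norm_num [one_add_one_eq_two]

theorem eval_neg_one_iterate_derivative_sq_sub_one_pow (n : ℕ) :
    (derivative^[n] (((X : R[X]) ^ 2 - 1) ^ n)).eval (-1) = (n ! : R) * (-2) ^ n := by
  rw [X_sq_sub_one_pow_eq_mul, mul_comm, eval_iterate_derivative_X_sub_C_pow_mul_self]
  norm_num

end CommRing

theorem degree_derivative_lt_of_natDegree_le {R : Type*} [Semiring R] {p : R[X]} {n : ℕ}
    (h : p.natDegree ≤ n) : (derivative p).degree < n := by
  rcases n with _ | n
  · rw [eq_C_of_natDegree_eq_zero (Nat.le_zero.mp h), derivative_C, degree_zero]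
    exact WithBot.bot_lt_coe 0
  · calc (derivative p).degree ≤ (derivative p).natDegree := degree_le_natDegree
      _ ≤ n := by exact_mod_cast (natDegree_derivative_le p).trans (by omega)
      _ < ↑(n + 1) := by exact_mod_cast n.lt_succ_self

theorem integral_eval_derivative_mul_eq_sub (p q : ℝ[X]) (a b : ℝ) :
    ∫ x in a..b, (derivative p).eval x * q.eval x =
      p.eval b * q.eval b - p.eval a * q.eval a -
        ∫ x in a..b, p.eval x * (derivative q).eval x := by
  have := intervalIntegral.integral_mul_deriv_eq_deriv_mul (fun x _ => p.hasDerivAt x)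
    (fun x _ => q.hasDerivAt x) ((derivative p).continuous.intervalIntegrable a b)
    ((derivative q).continuous.intervalIntegrable a b)
  linarith

theorem integral_eval_iterate_derivative_mul_eq {p : ℝ[X]} {a b : ℝ} {n : ℕ}
    (ha : ∀ m < n, (derivative^[m] p).eval a = 0) (hb : ∀ m < n, (derivative^[m] p).eval b = 0)
    (q : ℝ[X]) :
    ∫ x in a..b, (derivative^[n] p).eval x * q.eval x =
      (-1) ^ n * ∫ x in a..b, p.eval x * (derivative^[n] q).eval x := by
  induction n generalizing p with
  | zero => simp
  | succ n ih =>
    rw [Function.iterate_succ_apply, ih (fun m hm => ha (m + 1) (by omega))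
      (fun m hm => hb (m + 1) (by omega)), integral_eval_derivative_mul_eq_sub,
      show p.eval a = 0 from ha 0 n.succ_pos, show p.eval b = 0 from hb 0 n.succ_pos,
      ← Function.iterate_succ_apply' derivative]
    ring

end Polynomial

theorem natDegree_legendre_le (n : ℕ) : (legendre n).natDegree ≤ n := by
  refine (natDegree_smul_le _ _).trans ?_
  refine (natDegree_iterate_derivative _ _).trans ?_
  have : (((X : ℝ[X]) ^ 2 - 1) ^ n).natDegree ≤ n * 2 := by
    refine natDegree_pow_le_of_le n ?_
    rw [← C_1, natDegree_X_pow_sub_C]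
  omega

theorem degree_derivative_legendre_lt (n : ℕ) : (derivative (legendre n)).degree < n :=
  degree_derivative_lt_of_natDegree_le (natDegree_legendre_le n)

theorem eval_one_legendre (n : ℕ) : (legendre n).eval 1 = 1 := by
  rw [legendre, eval_smul, eval_one_iterate_derivative_sq_sub_one_pow, smul_eq_mul]
  field_simp

theorem eval_neg_one_legendre (n : ℕ) : (legendre n).eval (-1) = (-1) ^ n := by
  rw [legendre, eval_smul, eval_neg_one_iterate_derivative_sq_sub_one_pow, smul_eq_mul,
    neg_pow, mul_left_comm]
  field_simp

theorem integral_legendre_mul_eq_zero_of_degree_lt {n : ℕ} {q : ℝ[X]} (hq : q.degree < n) :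
    ∫ x in (-1 : ℝ)..1, (legendre n).eval x * q.eval x = 0 := by
  simp only [legendre, eval_smul, smul_eq_mul, mul_assoc]
  rw [intervalIntegral.integral_const_mul, integral_eval_iterate_derivative_mul_eq
    (fun _ => eval_neg_one_iterate_derivative_sq_sub_one_pow_of_lt)
    (fun _ => eval_one_iterate_derivative_sq_sub_one_pow_of_lt),
    iterate_derivative_eq_zero_of_degree_lt hq]
  simp

/-- Stiffness-in-time coefficients of the Legendre basis (proof of Theorem 3.1):
`∫_{-1}^1 P_k' P_j = 0` if `k ≤ j`, and `= 1 - (-1)^{k+j}` if `k > j`. -/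
theorem legendre_derivative_integrals (j k : ℕ) :
    (k ≤ j →
        ∫ x in (-1 : ℝ)..1, (derivative (legendre k)).eval x * (legendre j).eval x = 0)
    ∧ (j < k →
        ∫ x in (-1 : ℝ)..1, (derivative (legendre k)).eval x * (legendre j).eval x
          = 1 - (-1) ^ (k + j)) := by
  refine ⟨fun hkj => ?_, fun hjk => ?_⟩
  · simp_rw [mul_comm (eval _ (derivative _))]
    exact integral_legendre_mul_eq_zero_of_degree_lt
      ((degree_derivative_legendre_lt k).trans_le (by exact_mod_cast hkj))
  · rw [integral_eval_derivative_mul_eq_sub, integral_legendre_mul_eq_zero_of_degree_lt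
      ((degree_derivative_legendre_lt j).trans (by exact_mod_cast hjk)), eval_one_legendre,
      eval_one_legendre, eval_neg_one_legendre, eval_neg_one_legendre, pow_add]
    ring
end

section
/- Fix an integer d ≥ 0 and real numbers a < b. Suppose a < τ₁ < … < τ_{d+1} = b are points and w₁, …, w_{d+1} are real weights such that ∑_{j=1}^{d+1} w_j p(τ_j) = ∫_a^b p(t) dt for every polynomial p of degree at most 2d. Let χ be a real polynomial of degree at most d, let c ∈ ℝ, and let φ be the polynomial of degree at most d+1 with φ(a) = c and φ(τ_j) = χ(τ_j) for j = 1, …, d+1. Then for every polynomial ψ of degree at most d, ∫_a^b φ'(t) ψ(t) dt − ∫_a^b χ'(t) ψ(t) dt = (χ(a) − c) · ψ(a). -/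
/-!
Put `e = φ - χ`, so that the left-hand side is `∫ e' ψ`. Integrating by parts gives
`e(b) ψ(b) - e(a) ψ(a) - ∫ e ψ'`. The polynomial `e` vanishes at every node, in particular at
`b = τ_{d+1}`, and `e ψ'` has degree at most `2d`, so the quadrature rule computes `∫ e ψ' = 0`.
What remains is `-e(a) ψ(a) = (χ(a) - c) ψ(a)`.
-/

open Polynomial

namespace Polynomial

theorem natDegree_mul_derivative_le {R : Type*} [Semiring R] {p q : R[X]} {n : ℕ}
    (hp : p.natDegree ≤ n + 1) (hq : q.natDegree ≤ n) :
    (p * derivative q).natDegree ≤ 2 * n := by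
  by_cases hq' : derivative q = 0
  · simp [hq']
  · have hq_pos : q.natDegree ≠ 0 := fun h ↦ hq' (by rw [eq_C_of_natDegree_eq_zero h]; simp)
    have := natDegree_derivative_le q
    have := natDegree_mul_le (p := p) (q := derivative q)
    omega

theorem intervalIntegral_derivative_mul (p q : ℝ[X]) (a b : ℝ) :
    ∫ t in a..b, (derivative p).eval t * q.eval t
      = p.eval b * q.eval b - p.eval a * q.eval a
        - ∫ t in a..b, p.eval t * (derivative q).eval t := by
  have hparts := intervalIntegral.integral_deriv_mul_eq_sub
    (fun t _ ↦ p.hasDerivAt t) (fun t _ ↦ q.hasDerivAt t)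
    ((derivative p).continuous.intervalIntegrable a b)
    ((derivative q).continuous.intervalIntegrable a b)
  rw [intervalIntegral.integral_add ((by fun_prop : Continuous _).intervalIntegrable a b)
    ((by fun_prop : Continuous _).intervalIntegrable a b)] at hparts
  linarith

theorem intervalIntegral_eval_eq_zero_of_quadrature {ι : Type*} [Fintype ι] {τ w : ι → ℝ}
    {N : ℕ} {a b : ℝ}
    (hexact : ∀ p : ℝ[X], p.natDegree ≤ N → ∑ j, w j * p.eval (τ j) = ∫ t in a..b, p.eval t)
    {p : ℝ[X]} (hp : p.natDegree ≤ N) (hzero : ∀ j, p.eval (τ j) = 0) :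
    ∫ t in a..b, p.eval t = 0 := by
  rw [← hexact p hp]
  simp [hzero]

end Polynomial

theorem radau_interpolation_identity_general (d : ℕ) (a b : ℝ)
    (τ : Fin (d + 1) → ℝ) (w : Fin (d + 1) → ℝ)
    (hτb : τ (Fin.last d) = b)
    (hexact : ∀ p : Polynomial ℝ, p.natDegree ≤ 2 * d →
        ∑ j, w j * p.eval (τ j) = ∫ t in a..b, p.eval t)
    (χ : Polynomial ℝ) (hχdeg : χ.natDegree ≤ d) (c : ℝ)
    (φ : Polynomial ℝ) (hφdeg : φ.natDegree ≤ d + 1)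
    (hφa : φ.eval a = c) (hφτ : ∀ j, φ.eval (τ j) = χ.eval (τ j))
    (ψ : Polynomial ℝ) (hψdeg : ψ.natDegree ≤ d) :
    (∫ t in a..b, (derivative φ).eval t * ψ.eval t)
      - (∫ t in a..b, (derivative χ).eval t * ψ.eval t)
      = (χ.eval a - c) * ψ.eval a := by
  set e := φ - χ
  have he_nodes : ∀ j, e.eval (τ j) = 0 := fun j ↦ by simp [e, hφτ j]
  have he_deg : e.natDegree ≤ d + 1 :=
    (natDegree_sub_le _ _).trans (max_le hφdeg (hχdeg.trans d.le_succ))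
  have h_quad : ∫ t in a..b, e.eval t * (derivative ψ).eval t = 0 := by
    simpa using intervalIntegral_eval_eq_zero_of_quadrature hexact
      (natDegree_mul_derivative_le he_deg hψdeg) (fun j ↦ by simp [he_nodes j])
  have h_lhs : (∫ t in a..b, (derivative φ).eval t * ψ.eval t)
      - (∫ t in a..b, (derivative χ).eval t * ψ.eval t)
      = ∫ t in a..b, (derivative e).eval t * ψ.eval t := by
    rw [← intervalIntegral.integral_sub ((by fun_prop : Continuous _).intervalIntegrable a b)
      ((by fun_prop : Continuous _).intervalIntegrable a b)]
    simp [e, sub_mul]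
  have he_b : e.eval b = 0 := hτb ▸ he_nodes (Fin.last d)
  rw [h_lhs, intervalIntegral_derivative_mul, h_quad, he_b]
  simp only [zero_mul, eval_sub, hφa, zero_sub, sub_zero, e]
  ring

/-- Radau interpolation identity behind equation (3.2)/(3.3): if `φ` is the degree `≤ d+1`
interpolant of `χ` at the Gauss–Radau nodes taking the value `c` at the left endpoint,
then `∫ φ'ψ - ∫ χ'ψ = (χ(a) - c) ψ(a)` for every polynomial `ψ` of degree `≤ d`. -/
theorem radau_interpolation_identity (d : ℕ) (a b : ℝ) (hab : a < b)
    (τ : Fin (d + 1) → ℝ) (w : Fin (d + 1) → ℝ)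
    (hτmono : StrictMono τ) (hτa : a < τ 0) (hτb : τ (Fin.last d) = b)
    (hexact : ∀ p : Polynomial ℝ, p.natDegree ≤ 2 * d →
        ∑ j, w j * p.eval (τ j) = ∫ t in a..b, p.eval t)
    (χ : Polynomial ℝ) (hχdeg : χ.natDegree ≤ d) (c : ℝ)
    (φ : Polynomial ℝ) (hφdeg : φ.natDegree ≤ d + 1)
    (hφa : φ.eval a = c) (hφτ : ∀ j, φ.eval (τ j) = χ.eval (τ j))
    (ψ : Polynomial ℝ) (hψdeg : ψ.natDegree ≤ d) :
    (∫ t in a..b, (derivative φ).eval t * ψ.eval t)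
      - (∫ t in a..b, (derivative χ).eval t * ψ.eval t)
      = (χ.eval a - c) * ψ.eval a :=
  radau_interpolation_identity_general d a b τ w hτb hexact χ hχdeg c φ hφdeg hφa hφτ ψ hψdeg
end

section
/- Fix an integer d ≥ 0 and real numbers a < b. Suppose a < τ₁ < … < τ_{d+1} = b are points and w₁, …, w_{d+1} are real weights such that ∑_{j=1}^{d+1} w_j p(τ_j) = ∫_a^b p(t) dt for every polynomial p of degree at most 2d. Let χ be a real polynomial of degree at most d, let c ∈ ℝ, and let φ be the polynomial of degree at most d+1 with φ(a) = c and φ(τ_j) = χ(τ_j) for j = 1, …, d+1. Then ∫_a^b φ'(t) χ(t) dt ≥ (1/2)·(χ(b)² − c²). -/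
open Polynomial

lemma integral_poly_deriv (q : Polynomial ℝ) (a b : ℝ) :
    ∫ t in a..b, (derivative q).eval t = q.eval b - q.eval a :=
  intervalIntegral.integral_eq_sub_of_hasDerivAt (fun x _ => q.hasDerivAt x)
    ((derivative q).continuous.intervalIntegrable a b)

/-- Coercivity inequality (3.2) for the Radau interpolant: if `φ` is the degree `≤ d+1`
interpolant of `χ` at the Gauss–Radau nodes taking the value `c` at the left endpoint, then
`∫_a^b φ' χ ≥ ½ (χ(b)² - c²)`. -/
theorem radau_coercivity (d : ℕ) (a b : ℝ) (hab : a < b)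
    (τ : Fin (d + 1) → ℝ) (w : Fin (d + 1) → ℝ)
    (hτmono : StrictMono τ) (hτa : a < τ 0) (hτb : τ (Fin.last d) = b)
    (hexact : ∀ p : Polynomial ℝ, p.natDegree ≤ 2 * d →
        ∑ j, w j * p.eval (τ j) = ∫ t in a..b, p.eval t)
    (χ : Polynomial ℝ) (hχdeg : χ.natDegree ≤ d) (c : ℝ)
    (φ : Polynomial ℝ) (hφdeg : φ.natDegree ≤ d + 1)
    (hφa : φ.eval a = c) (hφτ : ∀ j, φ.eval (τ j) = χ.eval (τ j)) :
    (∫ t in a..b, (derivative φ).eval t * χ.eval t)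
      ≥ (1 / 2) * ((χ.eval b) ^ 2 - c ^ 2) := by
  set r : Polynomial ℝ := φ - χ with hr
  have hrj : ∀ j, r.eval (τ j) = 0 := by
    intro j; simp [hr, eval_sub, hφτ j]
  have hrb : r.eval b = 0 := by rw [← hτb]; exact hrj _
  have hχb : χ.eval b = φ.eval b := by rw [← hτb, hφτ]
  have hrdeg : r.natDegree ≤ d + 1 :=
    (natDegree_sub_le _ _).trans (max_le hφdeg (hχdeg.trans (Nat.le_succ d)))
  -- integrability of polynomial products
  have hint : ∀ p q : Polynomial ℝ,
      IntervalIntegrable (fun t => p.eval t * q.eval t) MeasureTheory.volume a b :=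
    fun p q => (p.continuous.mul q.continuous).intervalIntegrable a b
  -- ∫ χ' χ = ½ (χ(b)² - χ(a)²)
  have h1 : (∫ t in a..b, (derivative χ).eval t * χ.eval t)
      = ((χ.eval b) ^ 2 - (χ.eval a) ^ 2) / 2 := by
    have key : (∫ t in a..b, (derivative (χ * χ)).eval t)
        = χ.eval b * χ.eval b - χ.eval a * χ.eval a := by
      simpa using integral_poly_deriv (χ * χ) a b
    have heq : ∀ t : ℝ, (derivative (χ * χ)).eval t
        = 2 * ((derivative χ).eval t * χ.eval t) := by
      intro t; simp [derivative_mul]; try ring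
    rw [intervalIntegral.integral_congr (g := fun t => 2 * ((derivative χ).eval t * χ.eval t))
      (fun t _ => heq t), intervalIntegral.integral_const_mul] at key
    nlinarith [key]
  -- ∫ r χ' = 0 by quadrature exactness
  have h3 : (∫ t in a..b, r.eval t * (derivative χ).eval t) = 0 := by
    by_cases hχ0 : χ.natDegree = 0
    · obtain ⟨x, hx⟩ := natDegree_eq_zero.mp hχ0
      simp [← hx]
    · have hd1 : 1 ≤ d := le_trans (Nat.one_le_iff_ne_zero.2 hχ0) hχdeg
      have hdeg : (r * derivative χ).natDegree ≤ 2 * d := by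
        refine natDegree_mul_le.trans ?_
        have h4 : (derivative χ).natDegree ≤ χ.natDegree - 1 := natDegree_derivative_le χ
        omega
      have := hexact (r * derivative χ) hdeg
      simp only [eval_mul] at this
      rw [← this]
      apply Finset.sum_eq_zero
      intro j _
      simp [hrj j]
  -- ∫ (r'χ + rχ') = r(b)χ(b) - r(a)χ(a)
  have h2 : (∫ t in a..b, (derivative r).eval t * χ.eval t)
      = - (r.eval a * χ.eval a) := by
    have key : (∫ t in a..b, (derivative (r * χ)).eval t)
        = r.eval b * χ.eval b - r.eval a * χ.eval a := by
      simpa using integral_poly_deriv (r * χ) a b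
    have heq : ∀ t : ℝ, (derivative (r * χ)).eval t
        = (derivative r).eval t * χ.eval t + r.eval t * (derivative χ).eval t := by
      intro t; simp [derivative_mul]; try ring
    rw [intervalIntegral.integral_congr
      (g := fun t => (derivative r).eval t * χ.eval t + r.eval t * (derivative χ).eval t)
      (fun t _ => heq t),
      intervalIntegral.integral_add (hint (derivative r) χ) (hint r (derivative χ)), h3] at key
    rw [hrb] at key
    linarith [key]
  -- split ∫ φ'χ
  have hφsplit : (∫ t in a..b, (derivative φ).eval t * χ.eval t)
      = (∫ t in a..b, (derivative r).eval t * χ.eval t)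
        + (∫ t in a..b, (derivative χ).eval t * χ.eval t) := by
    rw [← intervalIntegral.integral_add (hint (derivative r) χ) (hint (derivative χ) χ)]
    apply intervalIntegral.integral_congr
    intro t _
    have : derivative φ = derivative r + derivative χ := by
      rw [hr, derivative_sub]; ring
    simp [this, eval_add]; ring
  have hca : c = r.eval a + χ.eval a := by
    rw [← hφa, hr]; simp [eval_sub]; try ring
  rw [hφsplit, h1, h2, hca, hχb]
  nlinarith [sq_nonneg (r.eval a)]
end
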